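/- arXiv:2210.17251 — 5 statements merged into one kernel-verified Lean document; each statement's English description precedes it below -/
import Mathlib

section
/- Given positive parameters, the system of equilibrium equations β_h − C_vh·(I_v/(S_v+I_v))·S_h − μ_h·S_h = 0, C_vh·(I_v/(S_v+I_v))·S_h − μ_h·I_h = 0, β_v − C_hv·I_h·S_v − μ_v·S_v = 0, C_hv·I_h·S_v − μ_v·I_v = 0 has a solution with all four components strictly positive if and only if R_0² = C_vh·C_hv·β_h/(μ_h²·μ_v) > 1, and in that case the solution is unique, given by I_h* = β_h·μ_v·(R_0²−1)/(β_h·C_hv + μ_v·μ_h·R_0²), S_h* = β_h·(C_hv·β_h/μ_h + μ_v)/(C_hv·β_h + μ_v·μ_h·R_0²), S_v* = β_v·(C_vh + μ_h)/(C_vh·μ_v + μ_v·μ_h·R_0²), I_v* = β_v·μ_h·(R_0²−1)/(C_vh·μ_v + μ_v·μ_h·R_0²). -/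
/-- Auxiliary lemma: any positive equilibrium forces `1 < R0sq` and the explicit formulas. -/
lemma endemic_aux
    (βh βv μh μv Cvh Chv : ℝ)
    (hβh : 0 < βh) (hβv : 0 < βv) (hμh : 0 < μh) (hμv : 0 < μv)
    (hCvh : 0 < Cvh) (hChv : 0 < Chv)
    (R0sq : ℝ) (hR0sq : R0sq = Cvh * Chv * βh / (μh ^ 2 * μv))
    (Sh Ih Sv Iv : ℝ) (hSh : 0 < Sh) (hIh : 0 < Ih) (hSv : 0 < Sv) (hIv : 0 < Iv)
    (e1 : βh - Cvh * (Iv / (Sv + Iv)) * Sh - μh * Sh = 0)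
    (e2 : Cvh * (Iv / (Sv + Iv)) * Sh - μh * Ih = 0)
    (e3 : βv - Chv * Ih * Sv - μv * Sv = 0)
    (e4 : Chv * Ih * Sv - μv * Iv = 0) :
    1 < R0sq ∧
    Ih = βh * μv * (R0sq - 1) / (βh * Chv + μv * μh * R0sq) ∧
    Sh = βh * (Chv * βh / μh + μv) / (Chv * βh + μv * μh * R0sq) ∧
    Sv = βv * (Cvh + μh) / (Cvh * μv + μv * μh * R0sq) ∧
    Iv = βv * μh * (R0sq - 1) / (Cvh * μv + μv * μh * R0sq) := by
  have hDne : Sv + Iv ≠ 0 := by positivity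
  have hR : μh ^ 2 * μv * R0sq = Cvh * Chv * βh := by
    rw [hR0sq]; field_simp
  have hA : μh * Sh + μh * Ih = βh := by linarith [e1, e2]
  have hB : μv * Sv + μv * Iv = βv := by linarith [e3, e4]
  have hC : Chv * Ih * Sv = μv * Iv := by linarith [e4]
  have hE : Cvh * Iv * Sh = μh * Ih * (Sv + Iv) := by
    field_simp at e2
    linarith [e2]
  have hSveq : Sv * (μv + Chv * Ih) = βv := by linear_combination hB + hC
  have hIvrel : μv * Iv * (μv + Chv * Ih) = Chv * Ih * βv := by
    linear_combination -(μv + Chv * Ih) * hC + Chv * Ih * hSveq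
  have hE2 : μv * (Cvh * Iv * Sh) = μh * Ih * βv := by
    linear_combination μv * hE + μh * Ih * hB
  have hfact : Ih * βv * (Cvh * Chv * Sh - μh * (μv + Chv * Ih)) = 0 := by
    linear_combination (μv + Chv * Ih) * hE2 - Cvh * Sh * hIvrel
  have h6 : Cvh * Chv * Sh = μh * (μv + Chv * Ih) := by
    have h0 : Ih * βv ≠ 0 := by positivity
    have := (mul_eq_zero.mp hfact).resolve_left h0
    linarith [this]
  have key' : μh * (Chv * (μh + Cvh) * Ih) = μh * (μh * μv * (R0sq - 1)) := by
    linear_combination Cvh * Chv * hA - hR - μh * h6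
  have key : Chv * (μh + Cvh) * Ih = μh * μv * (R0sq - 1) := by
    exact mul_left_cancel₀ hμh.ne' key'
  have hR1 : 1 < R0sq := by
    nlinarith [key, mul_pos hμh hμv, mul_pos (mul_pos hChv (by linarith : (0:ℝ) < μh + Cvh)) hIh]
  have hR0pos : 0 < R0sq := by linarith
  have hden1 : (0:ℝ) < βh * Chv + μv * μh * R0sq := by positivity
  have hden2 : (0:ℝ) < Cvh * μv + μv * μh * R0sq := by positivity
  refine ⟨hR1, ?_, ?_, ?_, ?_⟩
  · rw [eq_div_iff hden1.ne']
    have h7 : μh * (Ih * (βh * Chv + μv * μh * R0sq)) = μh * (βh * μv * (R0sq - 1)) := by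
      linear_combination βh * key + Ih * hR
    exact mul_left_cancel₀ hμh.ne' h7
  · rw [eq_div_iff (show Chv * βh + μv * μh * R0sq ≠ 0 by positivity)]
    have h7 : μh * (Sh * (Chv * βh + μv * μh * R0sq)) = μh * (βh * (Chv * βh / μh + μv)) := by
      field_simp
      linear_combination Sh * hR + βh * h6 + βh * Chv * hA
    exact mul_left_cancel₀ hμh.ne' h7
  · rw [eq_div_iff hden2.ne']
    linear_combination (μh + Cvh) * hSveq - Sv * key
  · rw [eq_div_iff hden2.ne']
    have hSvf : Sv * (Cvh * μv + μv * μh * R0sq) = βv * (Cvh + μh) := by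
      linear_combination (μh + Cvh) * hSveq - Sv * key
    linear_combination (Cvh + μh * R0sq) * hB - hSvf

theorem endemic_equilibrium_exists_unique_iff
    (βh βv μh μv Cvh Chv : ℝ)
    (hβh : 0 < βh) (hβv : 0 < βv) (hμh : 0 < μh) (hμv : 0 < μv)
    (hCvh : 0 < Cvh) (hChv : 0 < Chv)
    (R0sq : ℝ) (hR0sq : R0sq = Cvh * Chv * βh / (μh ^ 2 * μv)) :
    ((∃ Sh Ih Sv Iv : ℝ, 0 < Sh ∧ 0 < Ih ∧ 0 < Sv ∧ 0 < Iv ∧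
        βh - Cvh * (Iv / (Sv + Iv)) * Sh - μh * Sh = 0 ∧
        Cvh * (Iv / (Sv + Iv)) * Sh - μh * Ih = 0 ∧
        βv - Chv * Ih * Sv - μv * Sv = 0 ∧
        Chv * Ih * Sv - μv * Iv = 0) ↔ 1 < R0sq) ∧
    (∀ Sh Ih Sv Iv : ℝ, 0 < Sh → 0 < Ih → 0 < Sv → 0 < Iv →
        βh - Cvh * (Iv / (Sv + Iv)) * Sh - μh * Sh = 0 →
        Cvh * (Iv / (Sv + Iv)) * Sh - μh * Ih = 0 →
        βv - Chv * Ih * Sv - μv * Sv = 0 →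
        Chv * Ih * Sv - μv * Iv = 0 →
        Ih = βh * μv * (R0sq - 1) / (βh * Chv + μv * μh * R0sq) ∧
        Sh = βh * (Chv * βh / μh + μv) / (Chv * βh + μv * μh * R0sq) ∧
        Sv = βv * (Cvh + μh) / (Cvh * μv + μv * μh * R0sq) ∧
        Iv = βv * μh * (R0sq - 1) / (Cvh * μv + μv * μh * R0sq)) := by
  have hR : μh ^ 2 * μv * R0sq = Cvh * Chv * βh := by
    rw [hR0sq]; field_simp
  constructor
  · constructor
    · rintro ⟨Sh, Ih, Sv, Iv, hSh, hIh, hSv, hIv, e1, e2, e3, e4⟩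
      exact (endemic_aux βh βv μh μv Cvh Chv hβh hβv hμh hμv hCvh hChv R0sq hR0sq
        Sh Ih Sv Iv hSh hIh hSv hIv e1 e2 e3 e4).1
    · intro hR1
      set Ih : ℝ := μh * μv * (R0sq - 1) / (Chv * (μh + Cvh)) with hIhdef
      have hd1 : (0:ℝ) < Chv * (μh + Cvh) := by positivity
      have hIh : 0 < Ih := by
        apply div_pos _ hd1
        have : 0 < R0sq - 1 := by linarith
        positivity
      have k1 : Chv * (μh + Cvh) * Ih = μh * μv * (R0sq - 1) := by
        rw [hIhdef]; field_simp
      set Sh : ℝ := (βh - μh * Ih) / μh with hShdef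
      have k2 : μh * Sh = βh - μh * Ih := by
        rw [hShdef]; field_simp
      have hShpos : 0 < Sh := by
        apply div_pos _ hμh
        have hpos : (βh - μh * Ih) * (Chv * (μh + Cvh)) = βh * Chv * μh + μh ^ 2 * μv := by
          linear_combination -μh * k1 - hR
        nlinarith [hpos, hd1, mul_pos (mul_pos hβh hChv) hμh, mul_pos (mul_pos hμh hμh) hμv]
      have hdd : (0:ℝ) < μv + Chv * Ih := by
        have := mul_pos hChv hIh; linarith
      set Sv : ℝ := βv / (μv + Chv * Ih) with hSvdef
      have hSvpos : 0 < Sv := div_pos hβv hdd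
      have k3 : Sv * (μv + Chv * Ih) = βv := by
        rw [hSvdef]; field_simp
      set Iv : ℝ := (βv - μv * Sv) / μv with hIvdef
      have k4 : μv * Iv = βv - μv * Sv := by
        rw [hIvdef]; field_simp
      have hIvnum : (βv - μv * Sv) * (μv + Chv * Ih) = βv * Chv * Ih := by
        linear_combination -μv * k3
      have hIvpos : 0 < Iv := by
        apply div_pos _ hμv
        nlinarith [hIvnum, hdd, mul_pos (mul_pos hβv hChv) hIh]
      have hB : μv * (Sv + Iv) = βv := by linear_combination k4
      have hDne : Sv + Iv ≠ 0 := by positivity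
      have k5 : μv * Iv * (μv + Chv * Ih) = βv * Chv * Ih := by
        linear_combination (μv + Chv * Ih) * k4 - μv * k3
      have k6' : μh * (Cvh * Chv * Sh) = μh * (μh * (μv + Chv * Ih)) := by
        linear_combination Cvh * Chv * k2 - hR - μh * k1
      have k6 : Cvh * Chv * Sh = μh * (μv + Chv * Ih) := mul_left_cancel₀ hμh.ne' k6'
      have big : (μv * (μv + Chv * Ih)) * (Cvh * Iv * Sh) =
          (μv * (μv + Chv * Ih)) * (μh * Ih * (Sv + Iv)) := by
        linear_combination Cvh * Sh * k5 - μh * Ih * (μv + Chv * Ih) * hB + βv * Ih * k6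
      have hdd2 : (μv * (μv + Chv * Ih)) ≠ 0 := by positivity
      have e2core : Cvh * Iv * Sh = μh * Ih * (Sv + Iv) := mul_left_cancel₀ hdd2 big
      have e2 : Cvh * (Iv / (Sv + Iv)) * Sh - μh * Ih = 0 := by
        field_simp
        linear_combination e2core
      have e4 : Chv * Ih * Sv - μv * Iv = 0 := by linear_combination k3 - k4
      have e3 : βv - Chv * Ih * Sv - μv * Sv = 0 := by linear_combination -k3
      have e1 : βh - Cvh * (Iv / (Sv + Iv)) * Sh - μh * Sh = 0 := by
        linarith [e2, k2]
      exact ⟨Sh, Ih, Sv, Iv, hShpos, hIh, hSvpos, hIvpos, e1, e2, e3, e4⟩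
  · intro Sh Ih Sv Iv hSh hIh hSv hIv e1 e2 e3 e4
    exact (endemic_aux βh βv μh μv Cvh Chv hβh hβv hμh hμv hCvh hChv R0sq hR0sq
      Sh Ih Sv Iv hSh hIh hSv hIv e1 e2 e3 e4).2
end

section
/- If the endemic equilibrium components are given by the explicit formulas I_h* = β_h·μ_v·(R_0²−1)/(β_h·C_hv + μ_v·μ_h·R_0²), I_v* = β_v·μ_h·(R_0²−1)/(C_vh·μ_v + μ_v·μ_h·R_0²), then (μ_h + C_vh·I_v*/(β_v/μ_v))·(μ_v + C_hv·I_h*) − C_hv·S_v*·(C_vh·S_v*·S_h*/(β_v/μ_v)² + C_vh·I_v*·S_h*/(β_v/μ_v)²) = (R_0+1)·μ_v·μ_h·(R_0−1), which is positive when R_0 > 1. -/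
theorem p2_plus_p3_identity
    (βh βv μh μv Cvh Chv R0 : ℝ)
    (hβh : 0 < βh) (hβv : 0 < βv) (hμh : 0 < μh) (hμv : 0 < μv)
    (hCvh : 0 < Cvh) (hChv : 0 < Chv) (hR0 : 0 < R0)
    (hR0sq : R0 ^ 2 = Cvh * Chv * βh / (μh ^ 2 * μv))
    (Ihs Ivs Shs Svs : ℝ)
    (hIhs : Ihs = βh * μv * (R0 ^ 2 - 1) / (βh * Chv + μv * μh * R0 ^ 2))
    (hIvs : Ivs = βv * μh * (R0 ^ 2 - 1) / (Cvh * μv + μv * μh * R0 ^ 2))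
    (hShs : Shs = βh * (Chv * βh / μh + μv) / (Chv * βh + μv * μh * R0 ^ 2))
    (hSvs : Svs = βv * (Cvh + μh) / (Cvh * μv + μv * μh * R0 ^ 2)) :
    (μh + Cvh * Ivs / (βv / μv)) * (μv + Chv * Ihs) -
      Chv * Svs * (Cvh * Svs * Shs / (βv / μv) ^ 2 + Cvh * Ivs * Shs / (βv / μv) ^ 2)
      = (R0 + 1) * μv * μh * (R0 - 1) ∧
    (1 < R0 → 0 < (R0 + 1) * μv * μh * (R0 - 1)) := by
  constructor
  · have key : (R0 + 1) * μv * μh * (R0 - 1) = μv * μh * (R0 ^ 2 - 1) := by ring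
    rw [key]
    subst hIhs hIvs hShs hSvs
    rw [hR0sq]
    have h1 : μh ^ 2 * μv ≠ 0 := by positivity
    have h2 : βh * Chv + μv * μh * (Cvh * Chv * βh / (μh ^ 2 * μv)) ≠ 0 := by
      rw [mul_div_assoc]; positivity
    have h3 : Cvh * μv + μv * μh * (Cvh * Chv * βh / (μh ^ 2 * μv)) ≠ 0 := by
      rw [mul_div_assoc]; positivity
    have h4 : Chv * βh + μv * μh * (Cvh * Chv * βh / (μh ^ 2 * μv)) ≠ 0 := by
      rw [mul_div_assoc]; positivity
    field_simp
    ring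
  · intro h
    have : 0 < R0 - 1 := by linarith
    positivity
end

section
/- Suppose R_0 < 1 and τ ≥ 0. Then every complex root λ of the transcendental equation λ² + q_1·λ + q_2 + q_3·e^{−λτ} = 0, where q_1 = μ_h + μ_v, q_2 = μ_v·μ_h, q_3 = −μ_v·μ_h·R_0², has strictly negative real part. -/
/-!
Write the characteristic function as `(λ + μh)(λ + μv) + q3 e^{-λτ}`. If `Re λ ≥ 0`, then
`|λ + μh| |λ + μv| ≥ μh μv`, whereas `|q3 e^{-λτ}| ≤ |q3| = μh μv R0² < μh μv`, so `λ` cannot be a root.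
-/

open Complex

lemma Complex.le_norm_add_ofReal {z : ℂ} (hz : 0 ≤ z.re) (a : ℝ) : a ≤ ‖z + a‖ :=
  calc a ≤ z.re + a := le_add_of_nonneg_left hz
    _ = (z + a).re := by simp only [add_re, ofReal_re]
    _ ≤ ‖z + a‖ := re_le_norm _

lemma Complex.norm_exp_neg_mul_ofReal_le_one {z : ℂ} (hz : 0 ≤ z.re) {τ : ℝ} (hτ : 0 ≤ τ) :
    ‖exp (-z * τ)‖ ≤ 1 := by
  rw [norm_exp, Real.exp_le_one_iff]
  simpa using mul_nonneg hz hτ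

theorem Complex.re_neg_of_mul_add_exp_eq_zero {a b τ : ℝ} (hb : 0 ≤ b) (hτ : 0 ≤ τ)
    {c z : ℂ} (hc : ‖c‖ < a * b) (hz : (z + a) * (z + b) + c * exp (-z * τ) = 0) :
    z.re < 0 := by
  by_contra! hre
  have hroot : (z + a) * (z + b) = -(c * exp (-z * τ)) := eq_neg_of_add_eq_zero_left hz
  have hlower : a * b ≤ ‖(z + a) * (z + b)‖ := by
    rw [norm_mul]
    exact mul_le_mul (le_norm_add_ofReal hre a) (le_norm_add_ofReal hre b) hb (norm_nonneg _)
  have hupper : ‖c * exp (-z * τ)‖ ≤ ‖c‖ := by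
    rw [norm_mul]
    exact mul_le_of_le_one_right (norm_nonneg _) (norm_exp_neg_mul_ofReal_le_one hre hτ)
  rw [hroot, norm_neg] at hlower
  linarith

theorem dfe_char_roots_negative_real_part
    (μh μv R0 τ : ℝ)
    (hμh : 0 < μh) (hμv : 0 < μv) (hR0 : 0 ≤ R0) (hR0lt : R0 < 1) (hτ : 0 ≤ τ)
    (q1 q2 q3 : ℝ)
    (hq1 : q1 = μh + μv) (hq2 : q2 = μv * μh) (hq3 : q3 = -(μv * μh * R0 ^ 2)) :
    ∀ lam : ℂ,
      lam ^ 2 + (q1 : ℂ) * lam + (q2 : ℂ) + (q3 : ℂ) * Complex.exp (-lam * (τ : ℂ)) = 0 →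
      lam.re < 0 := by
  intro lam hroot
  have hq3_norm : ‖(q3 : ℂ)‖ < μh * μv := by
    have hR0sq : R0 ^ 2 < 1 := pow_lt_one₀ hR0 hR0lt two_ne_zero
    rw [norm_real, Real.norm_eq_abs, hq3, abs_neg, abs_of_nonneg (by positivity)]
    nlinarith [mul_pos hμh hμv]
  refine re_neg_of_mul_add_exp_eq_zero hμv.le hτ hq3_norm ?_
  subst hq1 hq2
  push_cast at hroot
  linear_combination hroot
end

section
/- Suppose p_1 > 0, p_2 + p_3 > 0, p_2 − p_3 > 0, and p_1² − 2p_2 > 0, with τ ≥ 0. Then every complex root λ of λ² + p_1·λ + p_2 + p_3·e^{−λτ} = 0 has strictly negative real part. -/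
/-! If `Re λ ≥ 0`, the delay term has modulus at most `|p₃| < p₂`, while the quadratic part
has modulus at least `p₂`: writing `λ = x + iy`, `a = x² + p₁x + p₂` and `b = 2x + p₁`,
its squared modulus is `a² + y²(b² - 2a) + y⁴`, and `b² - 2a ≥ p₁² - 2p₂ ≥ 0`. -/

theorem le_norm_sq_add_mul_add_of_re_nonneg {p1 p2 : ℝ} (hp1 : 0 ≤ p1) (hp2 : 0 ≤ p2)
    (hdisc : 2 * p2 ≤ p1 ^ 2) {z : ℂ} (hz : 0 ≤ z.re) :
    p2 ≤ ‖z ^ 2 + (p1 : ℂ) * z + (p2 : ℂ)‖ := by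
  set x := z.re
  set y := z.im
  set a := x ^ 2 + p1 * x + p2
  set b := 2 * x + p1
  have hnormSq :
      ‖z ^ 2 + (p1 : ℂ) * z + (p2 : ℂ)‖ ^ 2 = a ^ 2 + y ^ 2 * (b ^ 2 - 2 * a) + y ^ 4 := by
    rw [Complex.sq_norm, Complex.normSq_apply]
    simp only [Complex.add_re, Complex.add_im, Complex.mul_re, Complex.mul_im, pow_two,
      Complex.ofReal_re, Complex.ofReal_im]
    ring
  have ha : p2 ≤ a := by nlinarith [mul_nonneg hp1 hz]
  have hb : 0 ≤ b ^ 2 - 2 * a := by nlinarith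
  refine le_of_sq_le_sq ?_ (norm_nonneg _)
  rw [hnormSq]
  nlinarith [mul_nonneg (sq_nonneg y) hb, pow_nonneg (sq_nonneg y) 2]

theorem norm_exp_neg_mul_le_one {z : ℂ} {τ : ℝ} (hz : 0 ≤ z.re) (hτ : 0 ≤ τ) :
    ‖Complex.exp (-z * (τ : ℂ))‖ ≤ 1 := by
  rw [Complex.norm_exp, Real.exp_le_one_iff]
  simpa [Complex.mul_re] using mul_nonneg hz hτ

theorem abstract_delay_stability
    (p1 p2 p3 τ : ℝ)
    (hp1 : 0 < p1) (hsum : 0 < p2 + p3) (hdiff : 0 < p2 - p3)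
    (hdisc : 0 < p1 ^ 2 - 2 * p2) (hτ : 0 ≤ τ) :
    ∀ lam : ℂ,
      lam ^ 2 + (p1 : ℂ) * lam + (p2 : ℂ) + (p3 : ℂ) * Complex.exp (-lam * (τ : ℂ)) = 0 →
      lam.re < 0 := by
  intro lam heq
  by_contra! hre
  have hp3 : |p3| < p2 := abs_lt.mpr ⟨by linarith, by linarith⟩
  have hquad :
      lam ^ 2 + (p1 : ℂ) * lam + (p2 : ℂ) = -((p3 : ℂ) * Complex.exp (-lam * (τ : ℂ))) := by
    linear_combination heq
  have hdelay : ‖(p3 : ℂ) * Complex.exp (-lam * (τ : ℂ))‖ ≤ |p3| := by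
    rw [norm_mul, Complex.norm_real, Real.norm_eq_abs]
    exact mul_le_of_le_one_right (abs_nonneg p3) (norm_exp_neg_mul_le_one hre hτ)
  refine lt_irrefl p2 ?_
  calc
    p2 ≤ ‖lam ^ 2 + (p1 : ℂ) * lam + (p2 : ℂ)‖ :=
      le_norm_sq_add_mul_add_of_re_nonneg hp1.le (by linarith) (by linarith) hre
    _ = ‖(p3 : ℂ) * Complex.exp (-lam * (τ : ℂ))‖ := by rw [hquad, norm_neg]
    _ < p2 := hdelay.trans_lt hp3
end

section
/- Let all parameters be positive, R_0² = C_vh·C_hv·β_h/(μ_h²·μ_v), and (S_h*, I_h*, S_v*, I_v*) the positive endemic equilibrium. For positive reals S_h, I_h, S_v, I_v, u, w (where u = I_v(t−τ), w = S_h(t−τ)), the expression D = 4·μ_h·I_h* − μ_h·I_h*·(S_h*/S_h) − μ_h·I_h*·(I_h*·u·w/(I_h·I_v*·S_h*)) − μ_h·I_h*·(S_v*/S_v) − μ_h·I_h*·(I_v*·I_h·S_v/(I_v·I_h*·S_v*)) + μ_h·I_h*·ln(u·w/(I_v·S_h)) satisfies D = μ_h·I_h*·[F(S_h*/S_h) +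 F(I_h*·u·w/(I_h·I_v*·S_h*)) + F(S_v*/S_v) + F(I_v*·I_h·S_v/(I_v·I_h*·S_v*))] ≤ 0, where F(x) = 1 − x + ln x. -/
lemma F_nonpos (x : ℝ) (hx : 0 < x) : 1 - x + Real.log x ≤ 0 := by
  have := Real.log_le_sub_one_of_pos hx
  linarith

theorem lyapunov_derivative_nonpos
    (μh Ihs Shs Svs Ivs Sh Ih Sv Iv u w : ℝ)
    (hμh : 0 < μh) (hIhs : 0 < Ihs) (hShs : 0 < Shs) (hSvs : 0 < Svs) (hIvs : 0 < Ivs)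
    (hSh : 0 < Sh) (hIh : 0 < Ih) (hSv : 0 < Sv) (hIv : 0 < Iv)
    (hu : 0 < u) (hw : 0 < w)
    (F : ℝ → ℝ) (hF : ∀ x, F x = 1 - x + Real.log x)
    (D : ℝ)
    (hD : D = 4 * μh * Ihs - μh * Ihs * (Shs / Sh) -
      μh * Ihs * (Ihs * u * w / (Ih * Ivs * Shs)) - μh * Ihs * (Svs / Sv) -
      μh * Ihs * (Ivs * Ih * Sv / (Iv * Ihs * Svs)) +
      μh * Ihs * Real.log (u * w / (Iv * Sh))) :
    D = μh * Ihs * (F (Shs / Sh) + F (Ihs * u * w / (Ih * Ivs * Shs)) +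
          F (Svs / Sv) + F (Ivs * Ih * Sv / (Iv * Ihs * Svs))) ∧ D ≤ 0 := by
  set a1 := Shs / Sh with ha1
  set a2 := Ihs * u * w / (Ih * Ivs * Shs) with ha2
  set a3 := Svs / Sv with ha3
  set a4 := Ivs * Ih * Sv / (Iv * Ihs * Svs) with ha4
  have h1 : 0 < a1 := by positivity
  have h2 : 0 < a2 := by positivity
  have h3 : 0 < a3 := by positivity
  have h4 : 0 < a4 := by positivity
  have hprod : a1 * a2 * a3 * a4 = u * w / (Iv * Sh) := by
    rw [ha1, ha2, ha3, ha4]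
    field_simp
  have hlog : Real.log (u * w / (Iv * Sh)) =
      Real.log a1 + Real.log a2 + Real.log a3 + Real.log a4 := by
    rw [← hprod, Real.log_mul (by positivity) h4.ne', Real.log_mul (by positivity) h3.ne',
      Real.log_mul h1.ne' h2.ne']
  have hDeq : D = μh * Ihs * (F a1 + F a2 + F a3 + F a4) := by
    rw [hD, hlog, hF, hF, hF, hF]; ring
  refine ⟨hDeq, ?_⟩
  rw [hDeq]
  have : F a1 + F a2 + F a3 + F a4 ≤ 0 := by
    have := F_nonpos a1 h1
    have := F_nonpos a2 h2
    have := F_nonpos a3 h3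
    have := F_nonpos a4 h4
    rw [hF, hF, hF, hF]; linarith
  nlinarith [mul_pos hμh hIhs]
end
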